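/- Let R be a commutative ring and a ⊆ R an ideal. If a has a power of finite type (i.e. a^n is a finitely generated ideal for some n ≥ 1) or a is generated by a set of idempotent elements, then Γ_a(M) = Γ̄_a(M) for every R-module M. -/

import Mathlib

/-!
An element `x` lies in `Γ̄_a(M)` iff `a ≤ √(Ann x)` and in `Γ_a(M)` iff `a ^ k ≤ Ann x` for
some `k`. If `a ^ n` is finitely generated, then `a ^ n ≤ √(Ann x)` already puts a power of
`a ^ n` inside `Ann x`. If `a` is generated by idempotents, then `e ^ m • x = 0` gives
`e • x = e ^ (m + 1) • x = 0`, so `a` itself kills `x`.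
-/

/-- The small `a`-torsion submodule: elements killed by some power of `a`. -/
def smallTorsion {R : Type*} [CommRing R] (a : Ideal R) (M : Type*) [AddCommGroup M]
    [Module R M] : Submodule R M where
  carrier := {x | ∃ n : ℕ, ∀ r ∈ a ^ n, r • x = 0}
  zero_mem' := ⟨0, fun r _ => smul_zero r⟩
  add_mem' := by
    rintro x y ⟨m, hm⟩ ⟨n, hn⟩
    refine ⟨m + n, fun r hr => ?_⟩
    have h1 : r ∈ a ^ m := Ideal.pow_le_pow_right (Nat.le_add_right m n) hr
    have h2 : r ∈ a ^ n := Ideal.pow_le_pow_right (Nat.le_add_left n m) hr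
    rw [smul_add, hm r h1, hn r h2, add_zero]
  smul_mem' := by
    rintro c x ⟨n, hn⟩
    refine ⟨n, fun r hr => ?_⟩
    rw [smul_smul, mul_comm, ← smul_smul, hn r hr, smul_zero]

/-- The large `a`-torsion submodule: elements killed by a power of each element of `a`. -/
def largeTorsion {R : Type*} [CommRing R] (a : Ideal R) (M : Type*) [AddCommGroup M]
    [Module R M] : Submodule R M where
  carrier := {x | ∀ r ∈ a, ∃ n : ℕ, r ^ n • x = 0}
  zero_mem' := fun r _ => ⟨1, smul_zero _⟩
  add_mem' := by
    rintro x y hx hy r hr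
    obtain ⟨m, hm⟩ := hx r hr
    obtain ⟨n, hn⟩ := hy r hr
    refine ⟨m + n, ?_⟩
    have hx0 : r ^ (m + n) • x = 0 := by rw [pow_add, mul_comm, mul_smul, hm, smul_zero]
    have hy0 : r ^ (m + n) • y = 0 := by rw [pow_add, mul_smul, hn, smul_zero]
    rw [smul_add, hx0, hy0, add_zero]
  smul_mem' := by
    intro c x hx r hr
    obtain ⟨n, hn⟩ := hx r hr
    exact ⟨n, by rw [smul_smul, mul_comm, ← smul_smul, hn, smul_zero]⟩

/-- The weak assassin of `M`: primes minimal over the annihilator of some element. -/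
def weakAssassin (R : Type*) [CommRing R] (M : Type*) [AddCommGroup M] [Module R M] :
    Set (Ideal R) :=
  {p | ∃ x : M, p ∈ (Ideal.torsionOf R M x).minimalPrimes}

theorem IsIdempotentElem.smul_eq_zero_of_pow_smul_eq_zero {R M : Type*} [Monoid R] [AddMonoid M]
    [DistribMulAction R M] {e : R} (he : IsIdempotentElem e) {x : M} {m : ℕ}
    (h : e ^ m • x = 0) : e • x = 0 := by
  rw [← he.pow_succ_eq m, pow_succ', mul_smul, h, smul_zero]

section Torsion

variable {R : Type*} [CommRing R] {a : Ideal R} {M : Type*} [AddCommGroup M] [Module R M]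

theorem mem_smallTorsion_iff {x : M} :
    x ∈ smallTorsion a M ↔ ∃ n : ℕ, a ^ n ≤ Ideal.torsionOf R M x :=
  Iff.rfl

theorem mem_largeTorsion_iff {x : M} :
    x ∈ largeTorsion a M ↔ a ≤ (Ideal.torsionOf R M x).radical :=
  Iff.rfl

theorem smallTorsion_le_largeTorsion : smallTorsion a M ≤ largeTorsion a M :=
  fun _ ⟨n, hn⟩ _ hr => ⟨n, hn _ (Ideal.pow_mem_pow hr n)⟩

theorem largeTorsion_le_smallTorsion_of_fg_pow {n : ℕ} (hn : n ≠ 0) (hfg : (a ^ n).FG) :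
    largeTorsion a M ≤ smallTorsion a M := by
  intro x hx
  obtain ⟨k, hk⟩ := Ideal.exists_pow_le_of_le_radical_of_fg
    ((Ideal.pow_le_self hn).trans (mem_largeTorsion_iff.1 hx)) hfg
  exact mem_smallTorsion_iff.2 ⟨n * k, by rwa [pow_mul]⟩

theorem largeTorsion_le_smallTorsion_of_span_idempotents {E : Set R}
    (hE : ∀ e ∈ E, IsIdempotentElem e) :
    largeTorsion (Ideal.span E) M ≤ smallTorsion (Ideal.span E) M := by
  intro x hx
  refine mem_smallTorsion_iff.2 ⟨1, ?_⟩
  rw [pow_one, Ideal.span_le]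
  intro e he
  obtain ⟨m, hm⟩ := hx e (Ideal.subset_span he)
  exact (hE e he).smul_eq_zero_of_pow_smul_eq_zero hm

end Torsion

/-- if `a` has a power of finite type or is generated by idempotents, then
`Γ_a(M) = Γ̄_a(M)` for every `R`-module `M`. -/
theorem stmt8 (R : Type*) [CommRing R] (a : Ideal R)
    (h : (∃ n : ℕ, 1 ≤ n ∧ (a ^ n).FG) ∨
      (∃ E : Set R, (∀ e ∈ E, IsIdempotentElem e) ∧ a = Ideal.span E))
    (M : Type*) [AddCommGroup M] [Module R M] :
    smallTorsion a M = largeTorsion a M := by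
  refine le_antisymm smallTorsion_le_largeTorsion ?_
  rcases h with ⟨n, hn, hfg⟩ | ⟨E, hE, rfl⟩
  · exact largeTorsion_le_smallTorsion_of_fg_pow (Nat.one_le_iff_ne_zero.1 hn) hfg
  · exact largeTorsion_le_smallTorsion_of_span_idempotents hE
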